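/- For every n with n = 7 or n ≥ 9, the reset threshold of the automaton 𝒜_n is exactly 4n − 13. -/

import Mathlib

/-!
Upper bound. On the states `4, …, n - 1` the letters `a` and `b` act as two reflections of a
path (`chainState`), so `ab` walks along it. `prefixWord` sends every state either into
`{0, 1, 3}` or onto one of the first `n - 6` positions of the path; each `blockWord` moves the path
two positions towards its start, where states drop into `{0, 1, 3}`; and the suffix sends
`0`, `1`, `3` and the first few positions of the path to the sink `0`.

Lower bound. Read a reset word from the right. The set `S_v` of states that `v` sends to `0` keeps
its size when `b` is prepended (`b` permutes `Qₙ`); prepending `a` adds exactly one state if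
`1 ∉ S_v` and none otherwise (`a` permutes `Qₙ \ {1}` and sends `1` to `0`). A potential depending
only on which of the states `1, …, 6` lie in `S_v` gives `4 |S_v| ≤ 4 + |v| + potential ≤ 13 + |v|`,
and `S_w = Qₙ` for a reset word `w`.
-/

/-- The two letters of a binary alphabet. -/
inductive Letter where
  | a : Letter
  | b : Letter
deriving DecidableEq

/-- The transition function of the automaton `𝒜ₙ` on the state set
`Qₙ = {0, 1, …, n-1}` (represented inside `ℕ`):
`δ(0,a)=δ(0,b)=0`; `δ(1,a)=0`, `δ(2,a)=4`, `δ(3,a)=2`, `δ(4,a)=3`;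
`δ(1,b)=3`, `δ(2,b)=1`, `δ(3,b)=2`; and for `4 ≤ j ≤ n-1`:
`δ(j,a) = j-1` if `j ≥ 6` is even, `δ(j,a) = j+1` if `j ≥ 5` is odd and
`j ≠ n-1`, `δ(j,a) = j` if `j = n-1` is odd; `δ(j,b) = j-1` if `j ≥ 5` is odd,
`δ(j,b) = j+1` if `j ≥ 4` is even and `j ≠ n-1`, `δ(j,b) = j` if `j = n-1`
is even. -/
def anDelta (n : ℕ) (q : ℕ) (ℓ : Letter) : ℕ :=
  match q, ℓ with
  | 0, _ => 0
  | 1, Letter.a => 0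
  | 1, Letter.b => 3
  | 2, Letter.a => 4
  | 2, Letter.b => 1
  | 3, _ => 2
  | 4, Letter.a => 3
  | j, Letter.a => if j % 2 = 1 then (if j = n - 1 then j else j + 1) else j - 1
  | j, Letter.b => if j % 2 = 0 then (if j = n - 1 then j else j + 1) else j - 1

/-- Extension of the transition function of `𝒜ₙ` to words:
`δ(q, uv) = δ(δ(q, u), v)`. -/
def anStar (n : ℕ) (q : ℕ) (w : List Letter) : ℕ :=
  w.foldl (anDelta n) q

/-- The reset threshold of `𝒜ₙ`: the minimum length of a word `w` with
`δ(p, w) = δ(q, w)` for all `p, q ∈ Qₙ`. -/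
noncomputable def anResetThreshold (n : ℕ) : ℕ :=
  sInf {l : ℕ | ∃ w : List Letter,
    (∀ p q : ℕ, p < n → q < n → anStar n p w = anStar n q w) ∧ w.length = l}

@[simp] lemma anStar_nil (n q : ℕ) : anStar n q [] = q := rfl

lemma anStar_cons (n q : ℕ) (ℓ : Letter) (w : List Letter) :
    anStar n q (ℓ :: w) = anStar n (anDelta n q ℓ) w := rfl

lemma anStar_append (n q : ℕ) (u v : List Letter) :
    anStar n q (u ++ v) = anStar n (anStar n q u) v :=
  List.foldl_append

@[simp] lemma anStar_zero (n : ℕ) (w : List Letter) : anStar n 0 w = 0 := by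
  induction w with
  | nil => rfl
  | cons ℓ w ih => cases ℓ <;> exact ih

-- `rfl` on `anStar` of a literal word re-evaluates the nested `anDelta` matches exponentially
-- often, so words are evaluated by `simp` with these lemmas instead.
@[simp] lemma anDelta_zero (n : ℕ) (ℓ : Letter) : anDelta n 0 ℓ = 0 := by cases ℓ <;> rfl
@[simp] lemma anDelta_one_a (n : ℕ) : anDelta n 1 .a = 0 := rfl
@[simp] lemma anDelta_one_b (n : ℕ) : anDelta n 1 .b = 3 := rfl
@[simp] lemma anDelta_two_a (n : ℕ) : anDelta n 2 .a = 4 := rfl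
@[simp] lemma anDelta_two_b (n : ℕ) : anDelta n 2 .b = 1 := rfl
@[simp] lemma anDelta_three (n : ℕ) (ℓ : Letter) : anDelta n 3 ℓ = 2 := by cases ℓ <;> rfl
@[simp] lemma anDelta_four_a (n : ℕ) : anDelta n 4 .a = 3 := rfl

lemma anDelta_a_of_five_le {n q : ℕ} (hq : 5 ≤ q) :
    anDelta n q .a = if q % 2 = 1 then (if q = n - 1 then q else q + 1) else q - 1 := by
  obtain ⟨t, rfl⟩ := Nat.exists_eq_add_of_le' hq
  rfl

lemma anDelta_b_of_four_le {n q : ℕ} (hq : 4 ≤ q) :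
    anDelta n q .b = if q % 2 = 0 then (if q = n - 1 then q else q + 1) else q - 1 := by
  obtain rfl | hq := hq.eq_or_lt
  · rfl
  obtain ⟨t, rfl⟩ := Nat.exists_eq_add_of_le' hq
  rfl

/-- The states `4, …, n - 1` enumerated as `4, 6, 8, …` followed by the odd ones downwards to `5`.
In this order `b` reverses the list, `a` reverses it with its first entry `4` removed, and so
`ab` moves every state but `4` one position towards `4`. -/
def chainState (n h : ℕ) : ℕ :=
  if 2 * h + 5 ≤ n then 2 * h + 4 else 2 * n - 5 - 2 * h

section chainState

variable {n h : ℕ}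

lemma chainState_zero (hn : 5 ≤ n) : chainState n 0 = 4 := by
  simp [chainState, hn]

lemma four_le_chainState (hh : h < n - 4) : 4 ≤ chainState n h := by
  unfold chainState; split_ifs <;> omega

lemma chainState_lt (hh : h < n - 4) : chainState n h < n := by
  unfold chainState; split_ifs <;> omega

lemma exists_chainState_eq {q : ℕ} (h4 : 4 ≤ q) (hq : q < n) :
    ∃ h < n - 4, chainState n h = q := by
  rcases Nat.even_or_odd q with ⟨k, rfl⟩ | ⟨k, rfl⟩
  · exact ⟨k - 2, by omega, by unfold chainState; split_ifs <;> omega⟩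
  · exact ⟨n - 3 - k, by omega, by unfold chainState; split_ifs <;> omega⟩

lemma anDelta_chainState_b (hh : h < n - 4) :
    anDelta n (chainState n h) .b = chainState n (n - 5 - h) := by
  rw [anDelta_b_of_four_le (four_le_chainState hh)]
  unfold chainState; split_ifs <;> omega

lemma anDelta_chainState_a (h1 : 1 ≤ h) (hh : h < n - 4) :
    anDelta n (chainState n h) .a = chainState n (n - 4 - h) := by
  rw [anDelta_a_of_five_le (by unfold chainState; split_ifs <;> omega)]
  unfold chainState; split_ifs <;> omega

lemma anStar_chainState_b (hh : h < n - 4) (w : List Letter) :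
    anStar n (chainState n h) (.b :: w) = anStar n (chainState n (n - 5 - h)) w := by
  rw [anStar_cons, anDelta_chainState_b hh]

lemma anStar_chainState_ab (h1 : 1 ≤ h) (hh : h < n - 4) (w : List Letter) :
    anStar n (chainState n h) (.a :: .b :: w) = anStar n (chainState n (h - 1)) w := by
  rw [anStar_cons, anDelta_chainState_a h1 hh, anStar_chainState_b (by omega)]
  congr 2; omega

lemma anStar_chainState_aa (h1 : 1 ≤ h) (hh : h < n - 4) (w : List Letter) :
    anStar n (chainState n h) (.a :: .a :: w) = anStar n (chainState n h) w := by
  rw [anStar_cons, anDelta_chainState_a h1 hh, anStar_cons,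
    anDelta_chainState_a (by omega) (by omega)]
  congr 2; omega

lemma anStar_chainState_bb (hh : h < n - 4) (w : List Letter) :
    anStar n (chainState n h) (.b :: .b :: w) = anStar n (chainState n h) w := by
  rw [anStar_chainState_b hh, anStar_chainState_b (by omega)]
  congr 2; omega

end chainState

def prefixWord : List Letter := [.a, .b, .a, .a, .b, .a, .a, .b, .b]
def blockWord : List Letter := [.a, .b, .a, .b, .a, .a, .b, .b]
def oddSuffix : List Letter := [.a, .b, .a, .a, .b, .a]
def evenSuffix : List Letter := [.a, .b, .a, .b, .b, .b, .a, .b, .a, .a, .b, .b] ++ oddSuffix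

def blocks (k : ℕ) : List Letter := (List.replicate k blockWord).flatten

def resetWord (n : ℕ) : List Letter :=
  if n % 2 = 1 then prefixWord ++ blocks ((n - 7) / 2) ++ oddSuffix
  else prefixWord ++ blocks ((n - 10) / 2) ++ evenSuffix

section upperBound

variable {n h : ℕ}

lemma anStar_chainState_prefixWord (h2 : 2 ≤ h) (hh : h < n - 4) :
    anStar n (chainState n h) prefixWord = chainState n (n - 4 - h) := by
  rw [prefixWord, anStar_chainState_ab (by omega) hh, anStar_chainState_aa (by omega) (by omega),
    anStar_chainState_b (by omega), anStar_chainState_aa (by omega) (by omega),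
    anStar_chainState_bb (by omega), anStar_nil]
  congr 1; omega

lemma anStar_chainState_one_prefixWord (hn : 6 ≤ n) :
    anStar n (chainState n 1) prefixWord = 0 := by
  rw [prefixWord, anStar_chainState_ab le_rfl (by omega), chainState_zero (by omega)]
  simp [anStar_cons]

lemma anStar_two_prefixWord (hn : 6 ≤ n) : anStar n 2 prefixWord = 3 := by
  have h2 : anStar n 2 prefixWord =
      anStar n (chainState n 0) [.b, .a, .a, .b, .a, .a, .b, .b] := by
    rw [chainState_zero (by omega)]; rfl
  rw [h2, anStar_chainState_b (by omega), anStar_chainState_aa (by omega) (by omega),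
    anStar_chainState_b (by omega), Nat.sub_sub_self (by omega), chainState_zero (by omega)]
  simp [anStar_cons]

lemma anStar_prefixWord_append_eq_zero (hn : 7 ≤ n) {s : List Letter} (h1 : anStar n 1 s = 0)
    (h3 : anStar n 3 s = 0) (hs : ∀ h, 1 ≤ h → h ≤ n - 6 → anStar n (chainState n h) s = 0)
    {q : ℕ} (hq : q < n) : anStar n q (prefixWord ++ s) = 0 := by
  rw [anStar_append]
  rcases Nat.lt_or_ge q 4 with hq4 | hq4
  · interval_cases q
    · simp
    · simp [prefixWord, anStar_cons]
    · rw [anStar_two_prefixWord (by omega), h3]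
    · simp [prefixWord, anStar_cons]
  obtain ⟨h, hh, rfl⟩ := exists_chainState_eq hq4 hq
  rcases (by omega : h = 0 ∨ h = 1 ∨ 2 ≤ h) with rfl | rfl | h2
  · simpa [chainState_zero (by omega : 5 ≤ n), prefixWord, anStar_cons] using h1
  · rw [anStar_chainState_one_prefixWord (by omega), anStar_zero]
  · rw [anStar_chainState_prefixWord h2 hh]
    exact hs _ (by omega) (by omega)

lemma anStar_chainState_blockWord (h3 : 3 ≤ h) (hh : h < n - 4) :
    anStar n (chainState n h) blockWord = chainState n (h - 2) := by
  rw [blockWord, anStar_chainState_ab (by omega) hh, anStar_chainState_ab (by omega) (by omega),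
    anStar_chainState_aa (by omega) (by omega), anStar_chainState_bb (by omega), anStar_nil,
    Nat.sub_sub]

lemma anStar_chainState_one_blockWord (hn : 6 ≤ n) :
    anStar n (chainState n 1) blockWord = 1 := by
  rw [blockWord, anStar_chainState_ab le_rfl (by omega), chainState_zero (by omega)]
  simp [anStar_cons]

lemma anStar_chainState_two_blockWord (hn : 7 ≤ n) :
    anStar n (chainState n 2) blockWord = 3 := by
  rw [blockWord, anStar_chainState_ab (by omega) (by omega),
    anStar_chainState_ab le_rfl (by omega), chainState_zero (by omega)]
  simp [anStar_cons]

lemma blocks_succ (k : ℕ) : blocks (k + 1) = blockWord ++ blocks k := by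
  simp [blocks, List.replicate_succ]

lemma length_blocks (k : ℕ) : (blocks k).length = 8 * k := by
  induction k with
  | zero => rfl
  | succ k ih => rw [blocks_succ, List.length_append, ih]; simp [blockWord]; ring

lemma anStar_one_three_blocks_append {s : List Letter} (h1 : anStar n 1 s = 0)
    (h3 : anStar n 3 s = 0) : ∀ r, anStar n 1 (blocks r ++ s) = 0 ∧ anStar n 3 (blocks r ++ s) = 0
  | 0 => ⟨h1, h3⟩
  | r + 1 => by
    simp [blocks_succ, blockWord, anStar_cons]

lemma anStar_chainState_blocks_append (hn : 7 ≤ n) {s : List Letter} {m : ℕ}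
    (h1 : anStar n 1 s = 0) (h3 : anStar n 3 s = 0)
    (hs : ∀ h, 1 ≤ h → h ≤ m → h < n - 4 → anStar n (chainState n h) s = 0) (r : ℕ) :
    ∀ h, 1 ≤ h → h ≤ m + 2 * r → h < n - 4 → anStar n (chainState n h) (blocks r ++ s) = 0 := by
  induction r with
  | zero => simpa [blocks] using hs
  | succ r ih =>
    intro h hpos hm hh
    obtain ⟨k1, k3⟩ := anStar_one_three_blocks_append h1 h3 r
    rw [blocks_succ, List.append_assoc, anStar_append]
    rcases (by omega : h = 1 ∨ h = 2 ∨ 3 ≤ h) with rfl | rfl | h3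
    · rw [anStar_chainState_one_blockWord (by omega), k1]
    · rw [anStar_chainState_two_blockWord (by omega), k3]
    · rw [anStar_chainState_blockWord h3 hh]
      exact ih _ (by omega) (by omega) (by omega)

lemma anStar_one_oddSuffix : anStar n 1 oddSuffix = 0 := by simp [oddSuffix, anStar_cons]
lemma anStar_three_oddSuffix : anStar n 3 oddSuffix = 0 := by simp [oddSuffix, anStar_cons]
lemma anStar_one_evenSuffix : anStar n 1 evenSuffix = 0 := by simp [evenSuffix, anStar_cons]
lemma anStar_three_evenSuffix : anStar n 3 evenSuffix = 0 := by simp [evenSuffix, anStar_cons]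

lemma anStar_chainState_one_oddSuffix (hn : 6 ≤ n) : anStar n (chainState n 1) oddSuffix = 0 := by
  rw [oddSuffix, anStar_chainState_ab le_rfl (by omega), chainState_zero (by omega)]
  simp [anStar_cons]

lemma anStar_chainState_evenSuffix (hpos : 1 ≤ h) (h4 : h ≤ 4) (hh : h < n - 4) :
    anStar n (chainState n h) evenSuffix = 0 := by
  have hn : 5 ≤ n := by omega
  simp only [evenSuffix, oddSuffix, List.cons_append, List.nil_append]
  interval_cases h
  · rw [anStar_chainState_ab le_rfl hh, chainState_zero hn]
    simp [anStar_cons]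
  · rw [anStar_chainState_ab (by omega) hh, anStar_chainState_ab le_rfl (by omega),
      anStar_chainState_bb (by omega), chainState_zero hn]
    simp [anStar_cons]
  · rw [anStar_chainState_ab (by omega) hh, anStar_chainState_ab (by omega) (by omega),
      anStar_chainState_bb (by omega), anStar_chainState_ab le_rfl (by omega), chainState_zero hn]
    simp [anStar_cons]
  · rw [anStar_chainState_ab (by omega) hh, anStar_chainState_ab (by omega) (by omega),
      anStar_chainState_bb (by omega), anStar_chainState_ab (by omega) (by omega),
      anStar_chainState_aa le_rfl (by omega), anStar_chainState_bb (by omega),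
      anStar_chainState_ab le_rfl (by omega), chainState_zero hn]
    simp [anStar_cons]

lemma anStar_resetWord_eq_zero (hn : n = 7 ∨ 9 ≤ n) {q : ℕ} (hq : q < n) :
    anStar n q (resetWord n) = 0 := by
  unfold resetWord
  rw [List.append_assoc]
  split_ifs with hodd
  · obtain ⟨k1, k3⟩ := anStar_one_three_blocks_append anStar_one_oddSuffix anStar_three_oddSuffix
      ((n - 7) / 2)
    refine anStar_prefixWord_append_eq_zero (by omega) k1 k3 (fun h hpos hh => ?_) hq
    refine anStar_chainState_blocks_append (m := 1) (by omega) anStar_one_oddSuffix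
      anStar_three_oddSuffix (fun h hpos hle _ => ?_) _ h hpos (by omega) (by omega)
    obtain rfl : h = 1 := by omega
    exact anStar_chainState_one_oddSuffix (by omega)
  · obtain ⟨k1, k3⟩ := anStar_one_three_blocks_append anStar_one_evenSuffix
      anStar_three_evenSuffix ((n - 10) / 2)
    refine anStar_prefixWord_append_eq_zero (by omega) k1 k3 (fun h hpos hh => ?_) hq
    exact anStar_chainState_blocks_append (m := 4) (by omega) anStar_one_evenSuffix
      anStar_three_evenSuffix (fun h hpos h4 hh => anStar_chainState_evenSuffix hpos h4 hh) _
      h hpos (by omega) (by omega)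

lemma length_resetWord (hn : n = 7 ∨ 9 ≤ n) : (resetWord n).length = 4 * n - 13 := by
  unfold resetWord
  split_ifs <;> simp [length_blocks, prefixWord, oddSuffix, evenSuffix] <;> omega

end upperBound

theorem card_filter_apply_eq_of_isPeriodicPt {α : Type*} {A : Finset α} {f : α → α} {m : ℕ}
    (hf : Set.MapsTo f A A) (hper : ∀ x ∈ A, Function.IsPeriodicPt f (m + 1) x)
    (p : α → Prop) [DecidablePred p] :
    (A.filter fun x => p (f x)).card = (A.filter p).card := by
  refine Finset.card_nbij' f f^[m] (fun x hx => ?_) (fun y hy => ?_) (fun x hx => ?_)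
    (fun y hy => ?_)
  · simp only [Finset.coe_filter, Set.mem_ofPred_eq] at hx ⊢
    exact ⟨hf hx.1, hx.2⟩
  · simp only [Finset.coe_filter, Set.mem_ofPred_eq] at hy ⊢
    refine ⟨hf.iterate m hy.1, ?_⟩
    rw [← Function.iterate_succ_apply' f m, hper y hy.1]
    exact hy.2
  · simp only [Finset.coe_filter, Set.mem_ofPred_eq] at hx
    rw [← Function.iterate_succ_apply, hper x hx.1]
  · simp only [Finset.coe_filter, Set.mem_ofPred_eq] at hy
    rw [← Function.iterate_succ_apply' f m, hper y hy.1]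

section lowerBound

variable {n q : ℕ}

lemma anDelta_lt (hn : 5 ≤ n) (hq : q < n) (ℓ : Letter) : anDelta n q ℓ < n := by
  rcases Nat.lt_or_ge q 4 with hq4 | hq4
  · interval_cases q <;> cases ℓ <;>
      simp only [anDelta_zero, anDelta_one_a, anDelta_one_b, anDelta_two_a, anDelta_two_b,
        anDelta_three] <;> omega
  obtain ⟨h, hh, rfl⟩ := exists_chainState_eq hq4 hq
  cases ℓ
  · rcases Nat.eq_zero_or_pos h with rfl | hpos
    · rw [chainState_zero hn, anDelta_four_a]; omega
    · rw [anDelta_chainState_a hpos hh]; exact chainState_lt (by omega)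
  · rw [anDelta_chainState_b hh]; exact chainState_lt (by omega)

lemma anDelta_a_ne_one (hn : 5 ≤ n) (hq : q < n) : anDelta n q .a ≠ 1 := by
  rcases Nat.lt_or_ge q 4 with hq4 | hq4
  · interval_cases q <;> simp
  obtain ⟨h, hh, rfl⟩ := exists_chainState_eq hq4 hq
  rcases Nat.eq_zero_or_pos h with rfl | hpos
  · simp [chainState_zero hn]
  · rw [anDelta_chainState_a hpos hh]
    have := four_le_chainState (n := n) (h := n - 4 - h) (by omega)
    omega

lemma isPeriodicPt_anDelta_b (hn : 5 ≤ n) (hq : q < n) :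
    Function.IsPeriodicPt (anDelta n · .b) 6 q := by
  rcases Nat.lt_or_ge q 4 with hq4 | hq4
  · interval_cases q <;> simp [Function.IsPeriodicPt, Function.IsFixedPt]
  obtain ⟨h, hh, rfl⟩ := exists_chainState_eq hq4 hq
  simp (disch := omega) only [Function.IsPeriodicPt, Function.IsFixedPt, Function.iterate_succ,
    Function.iterate_zero, Function.comp_apply, id_eq, anDelta_chainState_b]
  congr 1; omega

lemma isPeriodicPt_anDelta_a (hn : 5 ≤ n) (hq : q < n) (h1 : q ≠ 1) :
    Function.IsPeriodicPt (anDelta n · .a) 6 q := by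
  rcases Nat.lt_or_ge q 4 with hq4 | hq4
  · interval_cases q <;> simp_all [Function.IsPeriodicPt, Function.IsFixedPt]
  obtain ⟨h, hh, rfl⟩ := exists_chainState_eq hq4 hq
  rcases Nat.eq_zero_or_pos h with rfl | hpos
  · simp [chainState_zero hn, Function.IsPeriodicPt, Function.IsFixedPt]
  simp (disch := omega) only [Function.IsPeriodicPt, Function.IsFixedPt, Function.iterate_succ,
    Function.iterate_zero, Function.comp_apply, id_eq, anDelta_chainState_a]
  congr 1; omega

def zeroPreimage (n : ℕ) (v : List Letter) : Finset ℕ :=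
  (Finset.range n).filter fun q => anStar n q v = 0

lemma mem_zeroPreimage {v : List Letter} : q ∈ zeroPreimage n v ↔ q < n ∧ anStar n q v = 0 := by
  simp [zeroPreimage]

lemma card_zeroPreimage_cons_b (hn : 5 ≤ n) (v : List Letter) :
    (zeroPreimage n (.b :: v)).card = (zeroPreimage n v).card :=
  card_filter_apply_eq_of_isPeriodicPt (f := (anDelta n · .b)) (m := 5)
    (fun q hq => by simpa using anDelta_lt hn (by simpa using hq) .b)
    (fun q hq => isPeriodicPt_anDelta_b hn (by simpa using hq)) (fun q => anStar n q v = 0)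

lemma card_zeroPreimage_cons_a (hn : 5 ≤ n) (v : List Letter) :
    (zeroPreimage n (.a :: v)).card = ((zeroPreimage n v).erase 1).card + 1 := by
  have h1 : 1 ∈ zeroPreimage n (.a :: v) := mem_zeroPreimage.2 ⟨by omega, anStar_zero n v⟩
  rw [← Finset.card_erase_add_one h1, zeroPreimage, zeroPreimage, ← Finset.filter_erase,
    ← Finset.filter_erase]
  congr 1
  refine card_filter_apply_eq_of_isPeriodicPt (f := (anDelta n · .a)) (m := 5) (fun q hq => ?_)
    (fun q hq => ?_) (fun q => anStar n q v = 0)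
  · simp only [Finset.coe_erase, Finset.coe_range, Set.mem_sdiff, Set.mem_Iio,
      Set.mem_singleton_iff] at hq ⊢
    exact ⟨anDelta_lt hn hq.1 .a, anDelta_a_ne_one hn hq.1⟩
  · simp only [Finset.mem_erase, Finset.mem_range] at hq
    exact isPeriodicPt_anDelta_a hn hq.2 hq.1

def bitsToFin (x y z : Bool) : Fin 8 :=
  ⟨4 * x.toNat + 2 * y.toNat + z.toNat, by cases x <;> cases y <;> cases z <;> decide⟩

/-- Row `x₁x₂x₃`, column `x₄x₅x₆`, read in binary, where `xⱼ` records whether state `j` is sent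
to `0`. The table was found by computer; all that is used about it are the three inequalities
below and its values `0` and `9` at the all-`false` and all-`true` profiles, which give the
constant `13 = 4 + 9`. -/
def potential (x₁ x₂ x₃ x₄ x₅ x₆ : Bool) : ℤ :=
  ![![0, 0, 0, 0, 0, 0, 0, 0], ![1, 1, 1, 1, 2, 2, 3, 3], ![2, 2, 3, 3, 2, 2, 4, 4],
    ![4, 4, 5, 5, 6, 6, 6, 6], ![3, 3, 3, 3, 4, 4, 5, 5], ![5, 6, 5, 6, 7, 8, 7, 8],
    ![5, 5, 7, 7, 6, 6, 7, 7], ![6, 7, 8, 8, 9, 9, 9, 9]] (bitsToFin x₁ x₂ x₃) (bitsToFin x₄ x₅ x₆)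

lemma potential_add_three_le : ∀ x₂ x₃ x₄ x₅ x₆ : Bool,
    potential false x₂ x₃ x₄ x₅ x₆ + 3 ≤ potential true x₄ x₂ x₃ x₆ x₅ := by
  decide

lemma potential_sub_one_le_a : ∀ x₂ x₃ x₄ x₅ x₆ : Bool,
    potential true x₂ x₃ x₄ x₅ x₆ - 1 ≤ potential true x₄ x₂ x₃ x₆ x₅ := by
  decide

lemma potential_sub_one_le_b : ∀ x₁ x₂ x₃ x₄ x₅ x₆ x₇ : Bool,
    potential x₁ x₂ x₃ x₄ x₅ x₆ - 1 ≤ potential x₃ x₁ x₂ x₅ x₄ x₇ := by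
  decide

def isKilled (n : ℕ) (v : List Letter) (q : ℕ) : Bool := anStar n q v = 0

lemma isKilled_cons (v : List Letter) (ℓ : Letter) (q : ℕ) :
    isKilled n (ℓ :: v) q = isKilled n v (anDelta n q ℓ) := rfl

lemma isKilled_zero (v : List Letter) : isKilled n v 0 = true := by
  simp [isKilled]

lemma isKilled_iff_mem_zeroPreimage {v : List Letter} (hq : q < n) :
    isKilled n v q = true ↔ q ∈ zeroPreimage n v := by
  rw [isKilled, decide_eq_true_iff, mem_zeroPreimage]
  exact ⟨fun h => ⟨hq, h⟩, And.right⟩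

def potentialAt (n : ℕ) (v : List Letter) : ℤ :=
  potential (isKilled n v 1) (isKilled n v 2) (isKilled n v 3) (isKilled n v 4)
    (isKilled n v 5) (isKilled n v 6)

lemma potentialAt_cons_a (hn : 7 ≤ n) (v : List Letter) :
    potentialAt n (.a :: v) = potential true (isKilled n v 4) (isKilled n v 2)
      (isKilled n v 3) (isKilled n v 6) (isKilled n v 5) := by
  have h5 : anDelta n 5 .a = 6 := by
    rw [anDelta_a_of_five_le le_rfl, if_pos rfl, if_neg (by omega)]
  have h6 : anDelta n 6 .a = 5 := rfl
  simp only [potentialAt, isKilled_cons, anDelta_one_a, anDelta_two_a, anDelta_three,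
    anDelta_four_a, h5, h6, isKilled_zero]

lemma potentialAt_cons_b (hn : 7 ≤ n) (v : List Letter) :
    potentialAt n (.b :: v) = potential (isKilled n v 3) (isKilled n v 1) (isKilled n v 2)
      (isKilled n v 5) (isKilled n v 4) (isKilled n v (anDelta n 6 .b)) := by
  have h4 : anDelta n 4 .b = 5 := by
    rw [anDelta_b_of_four_le le_rfl, if_pos rfl, if_neg (by omega)]
  have h5 : anDelta n 5 .b = 4 := rfl
  simp only [potentialAt, isKilled_cons, anDelta_one_b, anDelta_two_b, anDelta_three, h4, h5]

lemma card_sub_potentialAt_cons_le (hn : 7 ≤ n) (ℓ : Letter) (v : List Letter) :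
    4 * ((zeroPreimage n (ℓ :: v)).card : ℤ) - potentialAt n (ℓ :: v) ≤
      4 * (zeroPreimage n v).card - potentialAt n v + 1 := by
  cases ℓ
  · rw [card_zeroPreimage_cons_a (by omega), potentialAt_cons_a hn, potentialAt]
    have h1 := isKilled_iff_mem_zeroPreimage (v := v) (show 1 < n by omega)
    cases hk : isKilled n v 1
    · rw [Finset.erase_eq_of_notMem (by simpa [hk] using h1)]
      have := potential_add_three_le (isKilled n v 2) (isKilled n v 3) (isKilled n v 4)
        (isKilled n v 5) (isKilled n v 6)
      push_cast
      linarith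
    · rw [Finset.card_erase_add_one (h1.1 hk)]
      have := potential_sub_one_le_a (isKilled n v 2) (isKilled n v 3) (isKilled n v 4)
        (isKilled n v 5) (isKilled n v 6)
      linarith
  · rw [card_zeroPreimage_cons_b (by omega), potentialAt_cons_b hn, potentialAt]
    have := potential_sub_one_le_b (isKilled n v 1) (isKilled n v 2) (isKilled n v 3)
      (isKilled n v 4) (isKilled n v 5) (isKilled n v 6) (isKilled n v (anDelta n 6 .b))
    linarith

lemma four_mul_card_zeroPreimage_le (hn : 7 ≤ n) (v : List Letter) :
    4 * ((zeroPreimage n v).card : ℤ) ≤ 4 + v.length + potentialAt n v := by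
  induction v with
  | nil =>
    have hzero : zeroPreimage n [] = {0} := by
      ext q
      simp only [mem_zeroPreimage, anStar_nil, Finset.mem_singleton]
      omega
    have hpot : potentialAt n [] = 0 := rfl
    simp [hzero, hpot]
  | cons ℓ v ih =>
    have := card_sub_potentialAt_cons_le hn ℓ v
    rw [List.length_cons, Nat.cast_succ]
    linarith

lemma four_mul_sub_le_length (hn : 7 ≤ n) {w : List Letter} (hw : ∀ q < n, anStar n q w = 0) :
    4 * n - 13 ≤ w.length := by
  have hbound := four_mul_card_zeroPreimage_le hn w
  have hall : zeroPreimage n w = Finset.range n :=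
    Finset.filter_true_of_mem fun q hq => hw q (Finset.mem_range.1 hq)
  have hkilled : ∀ j < n, isKilled n w j = true := fun j hj => decide_eq_true (hw j hj)
  have hpot : potentialAt n w = potential true true true true true true := by
    simp (disch := omega) only [potentialAt, hkilled]
  rw [hall, hpot, Finset.card_range, show potential true true true true true true = 9 from rfl]
    at hbound
  omega

end lowerBound

/-- For every `n` with `n = 7` or `n ≥ 9`, the reset threshold of the
automaton `𝒜ₙ` is exactly `4n - 13`. -/
theorem an_resetThreshold_eq (n : ℕ) (hn : n = 7 ∨ 9 ≤ n) :
    anResetThreshold n = 4 * n - 13 := by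
  have hreset : 4 * n - 13 ∈ {l : ℕ | ∃ w : List Letter,
      (∀ p q : ℕ, p < n → q < n → anStar n p w = anStar n q w) ∧ w.length = l} :=
    ⟨resetWord n, fun p q hp hq => by rw [anStar_resetWord_eq_zero hn hp, anStar_resetWord_eq_zero hn hq],
      length_resetWord hn⟩
  refine le_antisymm (Nat.sInf_le hreset) (le_csInf ⟨_, hreset⟩ ?_)
  rintro l ⟨w, hw, rfl⟩
  exact four_mul_sub_le_length (by omega) fun q hq => by rw [hw q 0 hq (by omega), anStar_zero]
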